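/- arXiv:1312.1973 — 2 statements merged into one kernel-verified Lean document; each statement's English description precedes it below -/
import Mathlib

section
/- For fixed λ > 0 and integer N ≥ 2, define F̲ : {1,...,N-1} → ℝ (as a function of p ∈ [0,1)) by F̲(N-1) = (1-p)^{N-1}/(λ(N-1)) and, for 1 ≤ i ≤ N-2, F̲(i) = (1-p)^{i(N-i)}·[1/(λ i(N-i)) + F̲(i+1)] + ∑_{c=1}^{N-i-1} binomial(N-i, c)·(1-(1-p)^i)^c·(1-p)^{i(N-i-c)}·F̲(i+c). Then, as p → 0⁺, F̲(1) = F_0(1) - λ^{-1}(N-1)·p + o(p), where F_0(1) = ∑_{i=1}^{N-1} 1/(λ i(N-i)). -/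
/-!
At `p = 0` every branching factor `(1 - (1 - p) ^ i) ^ c`, `c ≥ 1`, vanishes, so the recursion
collapses to `F̲(i) = 1 / (λ i (N - i)) + F̲(i + 1)` and `F̲(1) = F₀(1)`. Differentiating at
`p = 0`, only the `c = 1` branching term survives; its contribution `(N - i) i F̲(i + 1)` cancels
the one of the survival factor `(1 - p) ^ (i (N - i))` acting on `F̲(i + 1)`, leaving
`F̲'(i) = F̲'(i + 1) - 1 / λ`. With `F̲'(N - 1) = -1 / λ` this gives `F̲'(1) = -(N - 1) / λ`.
The recursion only holds for `p ∈ [0, 1)`, so all derivatives are taken within `[0, ∞)`.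
-/

open Filter Topology Finset

lemma hasDerivAt_one_sub_pow_zero (m : ℕ) :
    HasDerivAt (fun p : ℝ => (1 - p) ^ m) (-(m : ℝ)) 0 := by
  simpa using ((hasDerivAt_id (0 : ℝ)).const_sub 1).fun_pow m

lemma hasDerivAt_one_sub_one_sub_pow_pow_zero (i : ℕ) {c : ℕ} (hc : c ≠ 0) :
    HasDerivAt (fun p : ℝ => (1 - (1 - p) ^ i) ^ c) (if c = 1 then (i : ℝ) else 0) 0 := by
  have h := ((hasDerivAt_one_sub_pow_zero i).const_sub 1).fun_pow c
  refine h.congr_deriv ?_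
  obtain rfl | hc1 := eq_or_ne c 1
  · simp
  · simp [hc1, zero_pow (show c - 1 ≠ 0 by omega)]

lemma hasDerivWithinAt_branching_sum {s : Set ℝ} {n : ℕ} (i : ℕ) {G : ℕ → ℝ → ℝ}
    (hn : 2 ≤ n) (hG : ∀ c ∈ Icc 1 (n - 1), DifferentiableWithinAt ℝ (G c) s 0) :
    HasDerivWithinAt (fun p => ∑ c ∈ Icc 1 (n - 1),
        (n.choose c : ℝ) * (1 - (1 - p) ^ i) ^ c * (1 - p) ^ (i * (n - c)) * G c p)
      (n * i * G 1 0) s 0 := by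
  have hterm : ∀ c ∈ Icc 1 (n - 1), HasDerivWithinAt
      (fun p => (n.choose c : ℝ) * (1 - (1 - p) ^ i) ^ c * (1 - p) ^ (i * (n - c)) * G c p)
      (if c = 1 then n * i * G 1 0 else 0) s 0 := by
    intro c hc
    have hc0 : c ≠ 0 := by simp at hc; omega
    have h := ((((hasDerivAt_one_sub_one_sub_pow_pow_zero i hc0).const_mul
      (n.choose c : ℝ)).mul (hasDerivAt_one_sub_pow_zero (i * (n - c)))).hasDerivWithinAt).mul
      (hG c hc).hasDerivWithinAt
    refine h.congr_deriv ?_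
    obtain rfl | hc1 := eq_or_ne c 1 <;> simp [*]
  refine (HasDerivWithinAt.fun_sum hterm).congr_deriv ?_
  rw [sum_ite_eq']
  simp; omega

lemma hasDerivAt_one_sub_pow_div_zero (lam : ℝ) {n : ℕ} (hn : n ≠ 0) :
    HasDerivAt (fun p : ℝ => (1 - p) ^ n / (lam * n)) (-lam⁻¹) 0 := by
  refine ((hasDerivAt_one_sub_pow_zero n).div_const (lam * n)).congr_deriv ?_
  rw [neg_div, div_mul_cancel_right₀ (by exact_mod_cast hn)]

noncomputable def floodingStep (lam : ℝ) (N i : ℕ) (F : ℕ → ℝ) (p : ℝ) : ℝ :=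
  (1 - p) ^ (i * (N - i)) * (1 / (lam * i * ((N : ℝ) - i)) + F (i + 1)) +
    ∑ c ∈ Icc 1 (N - i - 1),
      ((N - i).choose c : ℝ) * (1 - (1 - p) ^ i) ^ c * (1 - p) ^ (i * (N - i - c)) * F (i + c)

/-- `F p i` stands for `F̲(i)` at stationary ON-probability `p`. -/
structure FloodingRecursion (lam : ℝ) (N : ℕ) (F : ℝ → ℕ → ℝ) : Prop where
  last : ∀ p ∈ Set.Ico (0 : ℝ) 1, F p (N - 1) = (1 - p) ^ (N - 1) / (lam * ((N : ℝ) - 1))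
  step : ∀ p ∈ Set.Ico (0 : ℝ) 1, ∀ i : ℕ, 1 ≤ i → i ≤ N - 2 →
    F p i = floodingStep lam N i (F p) p

lemma floodingStep_zero (lam : ℝ) (N i : ℕ) (F : ℕ → ℝ) :
    floodingStep lam N i F 0 = 1 / (lam * i * ((N : ℝ) - i)) + F (i + 1) := by
  rw [floodingStep, sum_eq_zero fun c hc => ?_]
  · simp
  · simp [zero_pow (show c ≠ 0 by simp at hc; omega)]

lemma hasDerivWithinAt_floodingStep {s : Set ℝ} (lam : ℝ) {N i : ℕ} {F : ℝ → ℕ → ℝ}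
    {d : ℝ} (hi : 1 ≤ i) (hiN : i + 2 ≤ N)
    (hnext : HasDerivWithinAt (fun p => F p (i + 1)) d s 0)
    (hF : ∀ c ∈ Icc 1 (N - i - 1), DifferentiableWithinAt ℝ (fun p => F p (i + c)) s 0) :
    HasDerivWithinAt (fun p => floodingStep lam N i (F p) p) (d - lam⁻¹) s 0 := by
  have h := (((hasDerivAt_one_sub_pow_zero (i * (N - i))).hasDerivWithinAt).mul
    (hnext.const_add (1 / (lam * i * ((N : ℝ) - i))))).add
    (hasDerivWithinAt_branching_sum (G := fun c p => F p (i + c)) i (by omega) hF)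
  refine h.congr_deriv ?_
  have hx : (i : ℝ) * ((N : ℝ) - i) ≠ 0 := by
    have hiN' : (i : ℝ) + 2 ≤ N := by exact_mod_cast hiN
    have hi' : (1 : ℝ) ≤ i := by exact_mod_cast hi
    exact mul_ne_zero (by positivity) (by linarith)
  push_cast [Nat.cast_sub (show i ≤ N by omega)]
  rw [one_div, mul_assoc, mul_inv]
  linear_combination (-lam⁻¹) * mul_inv_cancel₀ hx

namespace FloodingRecursion

variable {lam : ℝ} {N : ℕ} {F : ℝ → ℕ → ℝ}

lemma eq_sum_at_zero (hF : FloodingRecursion lam N F) (hN : 2 ≤ N) {i : ℕ} (hi : 1 ≤ i)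
    (hiN : i ≤ N - 1) : F 0 i = ∑ j ∈ Icc i (N - 1), 1 / (lam * j * ((N : ℝ) - j)) := by
  refine Nat.decreasingInduction' (fun k hk hik ih => ?_) hiN ?_
  · rw [hF.step 0 ⟨le_rfl, zero_lt_one⟩ k (by omega) (by omega), floodingStep_zero, ih,
      Icc_add_one_left_eq_Ioc]
    exact add_sum_Ioc_eq_sum_Icc (f := fun j : ℕ => 1 / (lam * j * ((N : ℝ) - j))) (by omega)
  · rw [hF.last 0 ⟨le_rfl, zero_lt_one⟩, Icc_self, sum_singleton,
      Nat.cast_sub (show 1 ≤ N by omega)]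
    simp

lemma hasDerivWithinAt (hF : FloodingRecursion lam N F) (hN : 2 ≤ N) {i : ℕ} (hi : 1 ≤ i)
    (hiN : i ≤ N - 1) :
    HasDerivWithinAt (fun p => F p i) (-(((N : ℝ) - i) * lam⁻¹)) (Set.Ici 0) 0 := by
  have hnear : ∀ᶠ p in 𝓝[Set.Ici 0] (0 : ℝ), p ∈ Set.Ico 0 1 := Ico_mem_nhdsGE zero_lt_one
  suffices ∀ j, i ≤ j → j ≤ N - 1 →
      HasDerivWithinAt (fun p => F p j) (-(((N : ℝ) - j) * lam⁻¹)) (Set.Ici 0) 0 from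
    this i le_rfl hiN
  refine Nat.decreasingInduction' (fun k hk hik ih => ?_) hiN ?_
  · intro j hkj hjN
    obtain rfl | hkj := hkj.eq_or_lt
    · have h := hasDerivWithinAt_floodingStep lam (N := N) (i := k) (by omega) (by omega)
        (ih (k + 1) le_rfl hk) fun c hc =>
          (ih (k + c) (by simp at hc; omega) (by simp at hc; omega)).differentiableWithinAt
      refine (h.congr_of_eventuallyEq
        (hnear.mono fun p hp => hF.step p hp k (by omega) (by omega))
        (hF.step 0 ⟨le_rfl, zero_lt_one⟩ k (by omega) (by omega))).congr_deriv ?_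
      push_cast
      ring
    · exact ih j hkj hjN
  · intro j hij hjN
    obtain rfl : j = N - 1 := by omega
    have hcast : ((N - 1 : ℕ) : ℝ) = N - 1 := by
      push_cast [Nat.cast_sub (show 1 ≤ N by omega)]; ring
    have h := (hasDerivAt_one_sub_pow_div_zero lam (show N - 1 ≠ 0 by omega)).hasDerivWithinAt
      (s := Set.Ici 0)
    rw [hcast] at h
    refine (h.congr_of_eventuallyEq (hnear.mono fun p hp => hF.last p hp)
      (hF.last 0 ⟨le_rfl, zero_lt_one⟩)).congr_deriv ?_
    rw [hcast]
    ring

end FloodingRecursion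

theorem stmt_14_general (lam : ℝ) (N : ℕ) (hN : 2 ≤ N)
    (Fl : ℝ → ℕ → ℝ)
    (hlast : ∀ p ∈ Set.Ico (0 : ℝ) 1,
      Fl p (N - 1) = (1 - p)^(N - 1) / (lam * ((N : ℝ) - 1)))
    (hrec : ∀ p ∈ Set.Ico (0 : ℝ) 1, ∀ i : ℕ, 1 ≤ i → i ≤ N - 2 →
      Fl p i = (1 - p)^(i * (N - i)) * (1 / (lam * i * ((N : ℝ) - i)) + Fl p (i + 1)) +
        ∑ c ∈ Finset.Icc 1 (N - i - 1),
          ((N - i).choose c : ℝ) * (1 - (1 - p)^i)^c * (1 - p)^(i * (N - i - c)) *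
            Fl p (i + c)) :
    (fun p : ℝ =>
        Fl p 1 - ((∑ i ∈ Finset.Icc 1 (N - 1), 1 / (lam * i * ((N : ℝ) - i))) -
          lam⁻¹ * ((N : ℝ) - 1) * p)) =o[nhdsWithin 0 (Set.Ioi 0)] fun p => p := by
  have hF : FloodingRecursion lam N Fl := ⟨hlast, hrec⟩
  have h := hasDerivWithinAt_iff_isLittleO.mp (hF.hasDerivWithinAt hN le_rfl (by omega))
  rw [hF.eq_sum_at_zero hN le_rfl (by omega)] at h
  refine (h.mono (nhdsWithin_mono _ Set.Ioi_subset_Ici_self)).congr (fun p => ?_) (fun p => ?_)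
  · simp only [Nat.cast_one, smul_eq_mul]
    ring
  · exact sub_zero p

theorem stmt_14 (lam : ℝ) (hlam : 0 < lam) (N : ℕ) (hN : 2 ≤ N)
    (Fl : ℝ → ℕ → ℝ)
    (hlast : ∀ p ∈ Set.Ico (0 : ℝ) 1,
      Fl p (N - 1) = (1 - p)^(N - 1) / (lam * ((N : ℝ) - 1)))
    (hrec : ∀ p ∈ Set.Ico (0 : ℝ) 1, ∀ i : ℕ, 1 ≤ i → i ≤ N - 2 →
      Fl p i = (1 - p)^(i * (N - i)) * (1 / (lam * i * ((N : ℝ) - i)) + Fl p (i + 1)) +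
        ∑ c ∈ Finset.Icc 1 (N - i - 1),
          ((N - i).choose c : ℝ) * (1 - (1 - p)^i)^c * (1 - p)^(i * (N - i - c)) *
            Fl p (i + c)) :
    (fun p : ℝ =>
        Fl p 1 - ((∑ i ∈ Finset.Icc 1 (N - 1), 1 / (lam * i * ((N : ℝ) - i))) -
          lam⁻¹ * ((N : ℝ) - 1) * p)) =o[nhdsWithin 0 (Set.Ioi 0)] fun p => p :=
  stmt_14_general lam N hN Fl hlast hrec
end

section
/- For fixed λ > 0, N ≥ 2, and p ∈ [0,1], the sparse-regime flooding time F_0(1) = ∑_{i=1}^{N-1} 1/(λ i(N-i)) is an upper bound for the lower-bound recursion value F̲(1): F̲(1) ≤ F_0(1), with equality when p = 0. -/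
/-!
Write `F₀(i) = ∑_{j=i}^{N-1} 1/(λ j (N-j))`, so that `F₀(i) = 1/(λ i (N-i)) + F₀(i+1)` and `F₀`
is nonnegative and antitone. In the recursion for `F̲(i)` the weights `(1-p)^{i(N-i)}` and
`binomial(N-i,c) (1-(1-p)^i)^c (1-p)^{i(N-i-c)}` are terms of the binomial expansion of
`((1-(1-p)^i) + (1-p)^i)^{N-i} = 1`, so they sum to at most `1`; every quantity they weight is at
most `F₀(i)` by backward induction and antitonicity, hence `F̲(i) ≤ F₀(i)`. For `p = 0` all weights
but the first vanish and the recursion becomes the telescoping identity for `F₀`.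
-/

open Finset

lemma sum_choose_mul_pow_le_one {s : ℝ} (hs0 : 0 ≤ s) (hs1 : s ≤ 1) {m : ℕ} {S : Finset ℕ}
    (hS : S ⊆ range (m + 1)) :
    ∑ c ∈ S, (m.choose c : ℝ) * (1 - s) ^ c * s ^ (m - c) ≤ 1 := by
  have hexp : ∑ c ∈ range (m + 1), (m.choose c : ℝ) * (1 - s) ^ c * s ^ (m - c) = 1 := by
    have h := add_pow (1 - s) s m
    rw [sub_add_cancel, one_pow] at h
    exact (sum_congr rfl fun c _ => by ring).trans h.symm
  refine (sum_le_sum_of_subset_of_nonneg hS fun c _ _ => ?_).trans hexp.le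
  have : 0 ≤ 1 - s := by linarith
  positivity

lemma pow_add_sum_choose_mul_pow_le_one {s : ℝ} (hs0 : 0 ≤ s) (hs1 : s ≤ 1) (m : ℕ) :
    s ^ m + ∑ c ∈ Icc 1 (m - 1), (m.choose c : ℝ) * (1 - s) ^ c * s ^ (m - c) ≤ 1 := by
  have hsub : insert 0 (Icc 1 (m - 1)) ⊆ range (m + 1) := by
    intro c hc
    simp only [mem_insert, mem_Icc, mem_range] at hc ⊢
    omega
  have h := sum_choose_mul_pow_le_one hs0 hs1 hsub
  rwa [sum_insert (by simp), Nat.choose_zero_right, pow_zero, Nat.cast_one, one_mul, one_mul,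
    Nat.sub_zero] at h

noncomputable def sparseFloodTime (lam : ℝ) (N i : ℕ) : ℝ :=
  ∑ j ∈ Icc i (N - 1), 1 / (lam * j * ((N : ℝ) - j))

namespace sparseFloodTime

variable {lam : ℝ} {N : ℕ}

lemma term_nonneg (hlam : 0 ≤ lam) {j : ℕ} (hj : j ≤ N) :
    0 ≤ 1 / (lam * j * ((N : ℝ) - j)) := by
  have : (j : ℝ) ≤ N := by exact_mod_cast hj
  have : 0 ≤ (N : ℝ) - j := by linarith
  positivity

lemma nonneg (hlam : 0 ≤ lam) (i : ℕ) : 0 ≤ sparseFloodTime lam N i :=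
  sum_nonneg fun j hj => term_nonneg hlam (by have := (mem_Icc.mp hj).2; omega)

lemma antitone (hlam : 0 ≤ lam) : Antitone (sparseFloodTime lam N) := fun _ _ hij =>
  sum_le_sum_of_subset_of_nonneg (Icc_subset_Icc_left hij) fun j hj _ =>
    term_nonneg hlam (by have := (mem_Icc.mp hj).2; omega)

lemma eq_add_succ {i : ℕ} (hi : i ≤ N - 1) :
    sparseFloodTime lam N i = 1 / (lam * i * ((N : ℝ) - i)) + sparseFloodTime lam N (i + 1) := by
  rw [sparseFloodTime, Icc_eq_cons_Ioc hi, sum_cons, ← Icc_add_one_left_eq_Ioc]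
  rfl

lemma apply_sub_one (hN : 1 ≤ N) : sparseFloodTime lam N (N - 1) = 1 / (lam * ((N : ℝ) - 1)) := by
  rw [sparseFloodTime, Icc_self, sum_singleton, Nat.cast_sub hN, Nat.cast_one]
  ring_nf

end sparseFloodTime

def LowerFloodRecursion (lam : ℝ) (N : ℕ) (p : ℝ) (Fl : ℕ → ℝ) : Prop :=
  Fl (N - 1) = (1 - p) ^ (N - 1) / (lam * ((N : ℝ) - 1)) ∧
    ∀ i : ℕ, 1 ≤ i → i ≤ N - 2 →
      Fl i = (1 - p) ^ (i * (N - i)) * (1 / (lam * i * ((N : ℝ) - i)) + Fl (i + 1)) +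
        ∑ c ∈ Icc 1 (N - i - 1),
          ((N - i).choose c : ℝ) * (1 - (1 - p) ^ i) ^ c * (1 - p) ^ (i * (N - i - c)) *
            Fl (i + c)

namespace LowerFloodRecursion

variable {lam p : ℝ} {N : ℕ} {Fl : ℕ → ℝ}

theorem le_sparseFloodTime (hF : LowerFloodRecursion lam N p Fl) (hlam : 0 ≤ lam)
    (hp : p ∈ Set.Icc (0 : ℝ) 1) {i : ℕ} (hi1 : 1 ≤ i) (hiN : i ≤ N - 1) :
    Fl i ≤ sparseFloodTime lam N i := by
  obtain ⟨hlast, hrec⟩ := hF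
  have hr0 : 0 ≤ 1 - p := by linarith [hp.2]
  have hr1 : 1 - p ≤ 1 := by linarith [hp.1]
  induction i using Nat.strong_decreasing_induction with
  | base => exact ⟨N - 1, fun m hm _ hm' => absurd hm' (by omega)⟩
  | step i ih =>
    rcases (show i = N - 1 ∨ i ≤ N - 2 by omega) with rfl | hi2
    · rw [hlast, sparseFloodTime.apply_sub_one (by omega)]
      have : (1 : ℝ) ≤ N := by exact_mod_cast (show 1 ≤ N by omega)
      exact div_le_div_of_nonneg_right (pow_le_one₀ hr0 hr1) (mul_nonneg hlam (by linarith))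
    · have hs0 : 0 ≤ (1 - p) ^ i := pow_nonneg hr0 i
      have hs1 : (1 - p) ^ i ≤ 1 := pow_le_one₀ hr0 hr1
      have ht0 : 0 ≤ 1 - (1 - p) ^ i := by linarith
      have hweights : (1 - p) ^ (i * (N - i)) + ∑ c ∈ Icc 1 (N - i - 1),
          ((N - i).choose c : ℝ) * (1 - (1 - p) ^ i) ^ c * (1 - p) ^ (i * (N - i - c)) ≤ 1 := by
        simpa only [pow_mul] using pow_add_sum_choose_mul_pow_le_one hs0 hs1 (N - i)
      calc Fl i = _ := hrec i hi1 hi2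
        _ ≤ (1 - p) ^ (i * (N - i)) * sparseFloodTime lam N i + ∑ c ∈ Icc 1 (N - i - 1),
              ((N - i).choose c : ℝ) * (1 - (1 - p) ^ i) ^ c * (1 - p) ^ (i * (N - i - c)) *
                sparseFloodTime lam N i := by
          gcongr with c hc
          · rw [sparseFloodTime.eq_add_succ hiN]
            gcongr
            exact ih (i + 1) (by omega) (by omega) (by omega)
          · have hc := mem_Icc.mp hc
            exact (ih (i + c) (by omega) (by omega) (by omega)).trans
              (sparseFloodTime.antitone hlam (by omega))
        _ = ((1 - p) ^ (i * (N - i)) + ∑ c ∈ Icc 1 (N - i - 1),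
              ((N - i).choose c : ℝ) * (1 - (1 - p) ^ i) ^ c * (1 - p) ^ (i * (N - i - c))) *
                sparseFloodTime lam N i := by
          rw [add_mul, sum_mul]
        _ ≤ sparseFloodTime lam N i :=
          mul_le_of_le_one_left (sparseFloodTime.nonneg hlam i) hweights

theorem eq_sparseFloodTime (hF : LowerFloodRecursion lam N 0 Fl) {i : ℕ}
    (hi1 : 1 ≤ i) (hiN : i ≤ N - 1) : Fl i = sparseFloodTime lam N i := by
  obtain ⟨hlast, hrec⟩ := hF
  induction hiN using Nat.decreasingInduction with
  | self =>
    rw [hlast, sparseFloodTime.apply_sub_one (by omega), sub_zero, one_pow, div_eq_mul_one_div, one_mul]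
  | of_succ k hk ih =>
    have hstep : Fl k = 1 / (lam * k * ((N : ℝ) - k)) + Fl (k + 1) := by
      rw [hrec k hi1 (by omega), sum_eq_zero fun c hc => ?_]
      · simp
      · have : c ≠ 0 := by have := (mem_Icc.mp hc).1; omega
        simp [this]
    rw [hstep, ih (by omega), sparseFloodTime.eq_add_succ hk.le]

end LowerFloodRecursion

theorem stmt_16 (lam : ℝ) (hlam : 0 < lam) (N : ℕ) (hN : 2 ≤ N)
    (p : ℝ) (hp : p ∈ Set.Icc (0 : ℝ) 1) (Fl : ℕ → ℝ)
    (hlast : Fl (N - 1) = (1 - p)^(N - 1) / (lam * ((N : ℝ) - 1)))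
    (hrec : ∀ i : ℕ, 1 ≤ i → i ≤ N - 2 →
      Fl i = (1 - p)^(i * (N - i)) * (1 / (lam * i * ((N : ℝ) - i)) + Fl (i + 1)) +
        ∑ c ∈ Finset.Icc 1 (N - i - 1),
          ((N - i).choose c : ℝ) * (1 - (1 - p)^i)^c * (1 - p)^(i * (N - i - c)) *
            Fl (i + c)) :
    Fl 1 ≤ ∑ i ∈ Finset.Icc 1 (N - 1), 1 / (lam * i * ((N : ℝ) - i)) ∧
    (p = 0 → Fl 1 = ∑ i ∈ Finset.Icc 1 (N - 1), 1 / (lam * i * ((N : ℝ) - i))) := by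
  have hF : LowerFloodRecursion lam N p Fl := ⟨hlast, hrec⟩
  refine ⟨hF.le_sparseFloodTime hlam.le hp le_rfl (by omega), ?_⟩
  rintro rfl
  exact hF.eq_sparseFloodTime le_rfl (by omega)
end
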